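/- Assume hypotheses (H1) and (H2) for a smooth Hamiltonian H on the slow–fast phase space M = ℝ^{2r} × ℝ^{2k}, with momentum map J. Then there exists a smooth 1-form ζ on the slow factor, i.e. a smooth map ζ : ℝ^{2k} → (ℝ^{2k})^*, which is closed (for every m₁ the bilinear map (u,v) ↦ (Dζ)_{m₁}(u)(v) is symmetric), such that for every m = (m₀,m₁) ∈ M and every tangent vector (u,v) ∈ ℝ^{2r} × ℝ^{2k}, ⟨d₁J⟩_m(u,v) = ζ(m₁)(v). Moreover, if J is replaced by J' = J + c∘π₁ for a smooth c : ℝ^{2k} → ℝ (π₁ the projection onto the slow factor), then the corresponding 1-form is ζ' = ζ + Dc; in particular ζ' − ζ is exact. -/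

import Mathlib

open Real MeasureTheory Asymptotics Set

noncomputable section

/-- Fast factor `ℝ^{2r}` with variables `(y, x)`. -/
abbrev Fast (r : ℕ) := (Fin r → ℝ) × (Fin r → ℝ)

/-- Slow factor `ℝ^{2k}` with variables `(p, q)`. -/
abbrev Slow (k : ℕ) := (Fin k → ℝ) × (Fin k → ℝ)

/-- The slow-fast phase space `M = ℝ^{2r} × ℝ^{2k}`. -/
abbrev SF (r k : ℕ) := Fast r × Slow k

/-- The fast Hamiltonian vector field `X_H^{(0)}`: `ẏ = -∂H/∂x`, `ẋ = ∂H/∂y`,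
zero slow components. -/
def fastVF {r k : ℕ} (H : SF r k → ℝ) (m : SF r k) : SF r k :=
  ((fun i => -(fderiv ℝ H m ((0, Pi.single i 1), 0)),
    fun i => fderiv ℝ H m ((Pi.single i 1, 0), 0)), 0)

/-- The slow Hamiltonian vector field `X_H^{(1)}`: `ṗ = -∂H/∂q`, `q̇ = ∂H/∂p`,
zero fast components. -/
def slowVF {r k : ℕ} (H : SF r k → ℝ) (m : SF r k) : SF r k :=
  (0, (fun j => -(fderiv ℝ H m (0, (0, Pi.single j 1))),
       fun j => fderiv ℝ H m (0, (Pi.single j 1, 0))))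

/-- The differential of `f` in the slow variables only, `d₁f`, as a 1-form. -/
def d1Form {r k : ℕ} (f : SF r k → ℝ) (m w : SF r k) : ℝ :=
  fderiv ℝ f m ((0 : Fast r), w.2)

/-- Average `⟨α⟩` of a 1-form `α` along a `2π`-periodic flow `φ`:
`⟨α⟩_m(w) = (1/2π)∫₀^{2π} α_{φ(t,m)}(D_mφ(t,·) w) dt`. -/
def avg1 {r k : ℕ} (φ : ℝ → SF r k → SF r k) (α : SF r k → SF r k → ℝ)
    (m w : SF r k) : ℝ :=
  (1 / (2 * π)) * ∫ t in (0:ℝ)..(2 * π), α (φ t m) (fderiv ℝ (φ t) m w)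

/-- Integrating operator `S(α)` on a 1-form `α` along a `2π`-periodic flow `φ`. -/
def intOp1 {r k : ℕ} (φ : ℝ → SF r k → SF r k) (α : SF r k → SF r k → ℝ)
    (m w : SF r k) : ℝ :=
  (1 / (2 * π)) * ∫ t in (0:ℝ)..(2 * π), (t - π) * α (φ t m) (fderiv ℝ (φ t) m w)

/-!
Put `Y = ω⁻¹ X_H^{(0)}` and let `Ω = Σᵢ dyᵢ ∧ dxᵢ` be the fast symplectic form, so that (H2)
reads `d₀J = -ι_Y Ω`. The flow of `Y` preserves the slow coordinates and `J`, hence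
`φₜ^* dJ = dJ` and `⟨d₁J⟩ = dJ + (1/2π) ∫₀^{2π} φₜ^*(ι_Y Ω) dt`. By Cartan's formula the exterior
derivative of the integral is `∫₀^{2π} ∂ₜ (φₜ^* Ω) dt = φ_{2π}^* Ω - φ₀^* Ω = 0`, so `⟨d₁J⟩` is
closed. It also vanishes on fast vectors, and a closed 1-form annihilating the fibres of
`M → ℝ^{2k}` is the pullback of a closed 1-form `ζ` on the slow factor. Replacing `J` by
`J + c ∘ π₁` adds `π₁^* dc` to `d₁J`, and this form is invariant under the flow.
-/

section PartialDerivative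

variable {D E F : Type*} [NormedAddCommGroup D] [NormedSpace ℝ D] [NormedAddCommGroup E]
  [NormedSpace ℝ E] [NormedAddCommGroup F] [NormedSpace ℝ F]

theorem fderiv_comp_prodMk_left_apply {f : D × E → F} {x : D} {y : E}
    (hf : DifferentiableAt ℝ f (x, y)) (u : D) :
    fderiv ℝ (fun x' => f (x', y)) x u = fderiv ℝ f (x, y) (u, 0) := by
  have h : HasFDerivAt (fun x' => f (x', y)) _ x :=
    hf.hasFDerivAt.comp x (hasFDerivAt_prodMk_left (𝕜 := ℝ) x y)
  rw [h.fderiv]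
  rfl

theorem fderiv_comp_prodMk_right {f : D × E → F} {x : D} {y : E}
    (hf : DifferentiableAt ℝ f (x, y)) :
    fderiv ℝ (fun y' => f (x, y')) y = (fderiv ℝ f (x, y)).comp (ContinuousLinearMap.inr ℝ D E) :=
  (hf.hasFDerivAt.comp y (hasFDerivAt_prodMk_right (𝕜 := ℝ) x y)).fderiv

theorem fderiv_comp_prodMk_right_apply {f : D × E → F} {x : D} {y : E}
    (hf : DifferentiableAt ℝ f (x, y)) (v : E) :
    fderiv ℝ (fun y' => f (x, y')) y v = fderiv ℝ f (x, y) (0, v) := by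
  rw [fderiv_comp_prodMk_right hf]
  rfl

theorem fderiv_clm_apply_const_apply {α : E → D →L[ℝ] F} {x : E} (hα : DifferentiableAt ℝ α x)
    (u : E) (v : D) : fderiv ℝ (fun y => α y v) x u = fderiv ℝ α x u v := by
  simp [fderiv_clm_apply hα (differentiableAt_const v)]

end PartialDerivative

section ParametricIntegral

variable {E F : Type*} [NormedAddCommGroup E] [NormedSpace ℝ E] [FiniteDimensional ℝ E]
  [NormedAddCommGroup F] [NormedSpace ℝ F]

theorem hasFDerivAt_intervalIntegral_of_contDiff {K : ℝ × E → F} (hK : ContDiff ℝ 1 K)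
    (a b : ℝ) (x : E) :
    HasFDerivAt (fun y => ∫ t in a..b, K (t, y))
      (∫ t in a..b, (fderiv ℝ K (t, x)).comp (ContinuousLinearMap.inr ℝ ℝ E)) x := by
  have hK' : Continuous fun p => (fderiv ℝ K p).comp (ContinuousLinearMap.inr ℝ ℝ E) :=
    (hK.continuous_fderiv one_ne_zero).clm_comp continuous_const
  obtain ⟨C, hC⟩ := (isCompact_uIcc.prod (isCompact_closedBall x 1)).exists_bound_of_continuousOn
    hK'.continuousOn
  refine intervalIntegral.hasFDerivAt_integral_of_dominated_of_fderiv_le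
    (F' := fun y t => (fderiv ℝ K (t, y)).comp (ContinuousLinearMap.inr ℝ ℝ E))
    (bound := fun _ => C) (Metric.ball_mem_nhds x one_pos)
    (.of_forall fun y => (hK.continuous.comp (.prodMk_left y)).aestronglyMeasurable)
    ((hK.continuous.comp (.prodMk_left x)).intervalIntegrable a b)
    (hK'.comp (.prodMk_left x)).aestronglyMeasurable
    (.of_forall fun t ht y hy => hC (t, y) ⟨uIoc_subset_uIcc ht, Metric.ball_subset_closedBall hy⟩)
    intervalIntegrable_const (.of_forall fun t _ y _ => ?_)
  exact (hK.differentiable one_ne_zero (t, y)).hasFDerivAt.comp y (hasFDerivAt_prodMk_right t y)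

theorem fderiv_intervalIntegral_apply {K : ℝ × E → F} (hK : ContDiff ℝ 1 K) (a b : ℝ)
    (x v : E) :
    fderiv ℝ (fun y => ∫ t in a..b, K (t, y)) x v = ∫ t in a..b, fderiv ℝ K (t, x) (0, v) := by
  have hint : Continuous fun t => (fderiv ℝ K (t, x)).comp (ContinuousLinearMap.inr ℝ ℝ E) :=
    ((hK.continuous_fderiv one_ne_zero).clm_comp continuous_const).comp (.prodMk_left x)
  rw [(hasFDerivAt_intervalIntegral_of_contDiff hK a b x).fderiv,
    ContinuousLinearMap.intervalIntegral_apply (hint.intervalIntegrable a b)]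
  rfl

end ParametricIntegral

-- `E` and `F` share a universe because the induction passes from `F` to `E →L[ℝ] F`.
universe u in
theorem contDiff_intervalIntegral {E F : Type u} [NormedAddCommGroup E] [NormedSpace ℝ E]
    [FiniteDimensional ℝ E] [NormedAddCommGroup F] [NormedSpace ℝ F] {n : ℕ∞} {K : ℝ × E → F}
    (hK : ContDiff ℝ n K) (a b : ℝ) : ContDiff ℝ n fun x => ∫ t in a..b, K (t, x) := by
  refine contDiff_iff_forall_nat_le.2 fun m hm => ?_
  replace hK : ContDiff ℝ m K := hK.of_le (by exact_mod_cast hm)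
  clear hm
  induction m generalizing F with
  | zero =>
    rw [show ((0 : ℕ) : WithTop ℕ∞) = 0 from rfl, contDiff_zero] at hK ⊢
    exact intervalIntegral.continuous_parametric_intervalIntegral_of_continuous'
      (f := fun x t => K (t, x)) (hK.comp continuous_swap) a b
  | succ m ih =>
    have hK1 : ContDiff ℝ 1 K := hK.of_le (by exact_mod_cast Nat.le_add_left 1 m)
    have hd := fun x => hasFDerivAt_intervalIntegral_of_contDiff hK1 a b x
    rw [Nat.cast_succ] at hK ⊢
    refine contDiff_succ_iff_fderiv.2 ⟨fun x => (hd x).differentiableAt, by simp, ?_⟩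
    rw [funext fun x => (hd x).fderiv]
    exact ih ((hK.fderiv_right le_rfl).clm_comp contDiff_const)

section Flow

variable {E G : Type*} [NormedAddCommGroup E] [NormedSpace ℝ E] [NormedAddCommGroup G]
  [NormedSpace ℝ G] {φ : ℝ → E → E} {Y : E → E}

theorem fderiv_apply_fderiv_eq_of_comp_eq_self {f : E → G} {g : E → E} (hfg : f ∘ g = f)
    {x : E} (hf : DifferentiableAt ℝ f (g x)) (hg : DifferentiableAt ℝ g x) (w : E) :
    fderiv ℝ f (g x) (fderiv ℝ g x w) = fderiv ℝ f x w := by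
  rw [← ContinuousLinearMap.comp_apply, ← fderiv_comp x hf hg, hfg]

theorem fderiv_flow_eq_comp_inr (hΦ : Differentiable ℝ fun p : ℝ × E => φ p.1 p.2) (t : ℝ)
    (x : E) : fderiv ℝ (φ t) x
      = (fderiv ℝ (fun p : ℝ × E => φ p.1 p.2) (t, x)).comp (ContinuousLinearMap.inr ℝ ℝ E) :=
  fderiv_comp_prodMk_right (hΦ (t, x))

theorem apply_flow_eq_of_fderiv_apply_eq_zero
    (hφ' : ∀ t x, HasDerivAt (fun s => φ s x) (Y (φ t x)) t) (hφ0 : ∀ x, φ 0 x = x)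
    {f : E → G} (hf : Differentiable ℝ f) (hfY : ∀ x, fderiv ℝ f x (Y x) = 0) (t : ℝ) (x : E) :
    f (φ t x) = f x := by
  have hderiv : ∀ s, HasDerivAt (fun s => f (φ s x)) 0 s := fun s => by
    have h := (hf (φ s x)).hasFDerivAt.comp_hasDerivAt s (hφ' s x)
    rwa [hfY] at h
  simpa only [hφ0] using is_const_of_deriv_eq_zero (fun s => (hderiv s).differentiableAt)
    (fun s => (hderiv s).deriv) t 0

theorem fderiv_uncurry_apply_one_zero
    (hφ' : ∀ t x, HasDerivAt (fun s => φ s x) (Y (φ t x)) t)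
    (hΦ : Differentiable ℝ fun p : ℝ × E => φ p.1 p.2) (t : ℝ) (x : E) :
    fderiv ℝ (fun p : ℝ × E => φ p.1 p.2) (t, x) (1, 0) = Y (φ t x) := by
  have h := (hΦ (t, x)).hasFDerivAt.comp_hasDerivAt t
    ((hasDerivAt_id t).prodMk (hasDerivAt_const t x))
  exact h.unique (hφ' t x)

theorem hasDerivAt_fderiv_flow_apply
    (hφ' : ∀ t x, HasDerivAt (fun s => φ s x) (Y (φ t x)) t)
    (hΦ : ContDiff ℝ 2 fun p : ℝ × E => φ p.1 p.2) (hY : Differentiable ℝ Y) (t : ℝ) (x w : E) :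
    HasDerivAt (fun s => fderiv ℝ (φ s) x w) (fderiv ℝ Y (φ t x) (fderiv ℝ (φ t) x w)) t := by
  set Φ : ℝ × E → E := fun p => φ p.1 p.2
  have hΦ1 : Differentiable ℝ Φ := hΦ.differentiable two_ne_zero
  have hDΦ : Differentiable ℝ (fderiv ℝ Φ) :=
    (hΦ.fderiv_right (m := 1) (by norm_num)).differentiable one_ne_zero
  have hpartial : ∀ s, fderiv ℝ (φ s) x w = fderiv ℝ Φ (s, x) (0, w) := fun s =>
    fderiv_comp_prodMk_right_apply (hΦ1 (s, x)) w
  have hsymm : fderiv ℝ (fderiv ℝ Φ) (t, x) (1, 0) (0, w)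
      = fderiv ℝ (fderiv ℝ Φ) (t, x) (0, w) (1, 0) :=
    (hΦ.contDiffAt.isSymmSndFDerivAt (by simp)).eq _ _
  have htime : fderiv ℝ (fun p => fderiv ℝ Φ p (1, 0)) (t, x) (0, w)
      = fderiv ℝ (fderiv ℝ Φ) (t, x) (0, w) (1, 0) :=
    fderiv_clm_apply_const_apply (hDΦ _) _ _
  have hgen : (fun p => fderiv ℝ Φ p (1, 0)) = Y ∘ Φ :=
    funext fun p => fderiv_uncurry_apply_one_zero hφ' hΦ1 p.1 p.2
  have hD : HasDerivAt (fun s => fderiv ℝ Φ (s, x) (0, w))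
      (fderiv ℝ (fderiv ℝ Φ) (t, x) (1, 0) (0, w)) t := by
    have h := (hDΦ (t, x)).hasFDerivAt.comp_hasDerivAt t
      ((hasDerivAt_id t).prodMk (hasDerivAt_const t x))
    simpa using h.clm_apply (hasDerivAt_const t ((0 : ℝ), w))
  rw [hsymm, ← htime, hgen, fderiv_comp (t, x) (hY _) (hΦ1 _),
    ContinuousLinearMap.comp_apply] at hD
  simpa only [hpartial] using hD

end Flow

section ClosedOneForm

variable {E F : Type*} [NormedAddCommGroup E] [NormedSpace ℝ E] [NormedAddCommGroup F]
  [NormedSpace ℝ F]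

-- `dα = 0` in coordinates; it says nothing where `α` is not differentiable (`fderiv` is `0`).
def IsClosedOneForm (α : E → E →L[ℝ] ℝ) : Prop :=
  ∀ x u v, fderiv ℝ α x u v = fderiv ℝ α x v u

theorem isClosedOneForm_fderiv {f : E → ℝ} (hf : ContDiff ℝ 2 f) :
    IsClosedOneForm (fderiv ℝ f) :=
  fun x => (hf.contDiffAt.isSymmSndFDerivAt (by simp)).eq

theorem IsClosedOneForm.add {α β : E → E →L[ℝ] ℝ} (hα : IsClosedOneForm α)
    (hβ : IsClosedOneForm β) (hα' : Differentiable ℝ α) (hβ' : Differentiable ℝ β) :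
    IsClosedOneForm (α + β) := fun x u v => by
  simp [fderiv_add (hα' x) (hβ' x), hα x u v, hβ x u v]

theorem IsClosedOneForm.const_smul {α : E → E →L[ℝ] ℝ} (hα : IsClosedOneForm α)
    (hα' : Differentiable ℝ α) (c : ℝ) : IsClosedOneForm (c • α) := fun x u v => by
  simp [fderiv_const_smul (hα' x), hα x u v]

variable {α : E × F → E × F →L[ℝ] ℝ}

theorem IsClosedOneForm.apply_eq_apply_zero_snd (hα : IsClosedOneForm α)
    (hα' : Differentiable ℝ α) (hfib : ∀ p u, α p (u, 0) = 0) (p w : E × F) :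
    α p w = α (0, p.2) (0, w.2) := by
  obtain ⟨x, s⟩ := p
  obtain ⟨u, v⟩ := w
  have hfast : ∀ y, α (y, s) (u, v) = α (y, s) (0, v) := fun y => by
    rw [← zero_add (α (y, s) (0, v)), ← hfib (y, s) u, ← map_add, Prod.mk_add_mk, add_zero,
      zero_add]
  have hslice : Differentiable ℝ fun y => α (y, s) (0, v) :=
    (hα'.comp (differentiable_id.prodMk (differentiable_const s))).clm_apply
      (differentiable_const _)
  have hconst : ∀ y, fderiv ℝ (fun y => α (y, s) (0, v)) y = 0 := fun y => by
    ext u'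
    rw [fderiv_comp_prodMk_left_apply (f := fun q => α q (0, v))
        ((hα' _).clm_apply (differentiableAt_const _)),
      fderiv_clm_apply_const_apply (hα' _), hα, ← fderiv_clm_apply_const_apply (hα' _)]
    simp [hfib]
  rw [hfast, is_const_of_fderiv_eq_zero hslice hconst x 0]

theorem IsClosedOneForm.comp_inr (hα : IsClosedOneForm α) (hα' : Differentiable ℝ α) :
    IsClosedOneForm fun s => (α (0, s)).comp (ContinuousLinearMap.inr ℝ E F) := by
  have hd : Differentiable ℝ fun s => (α (0, s)).comp (ContinuousLinearMap.inr ℝ E F) :=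
    (hα'.comp ((differentiable_const 0).prodMk differentiable_id)).clm_comp
      (differentiable_const _)
  have key : ∀ s u v, fderiv ℝ (fun s => (α (0, s)).comp (ContinuousLinearMap.inr ℝ E F)) s u v
      = fderiv ℝ α (0, s) (0, u) (0, v) := fun s u v => by
    rw [← fderiv_clm_apply_const_apply (hd s)]
    exact (fderiv_comp_prodMk_right_apply (f := fun q => α q (0, v))
      ((hα' _).clm_apply (differentiableAt_const _)) u).trans
      (fderiv_clm_apply_const_apply (hα' _) _ _)
  intro s u v
  rw [key, key, hα]

theorem IsClosedOneForm.exists_eq_comp_snd {n : WithTop ℕ∞} (hα : IsClosedOneForm α)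
    (hα' : ContDiff ℝ n α) (hn : n ≠ 0) (hfib : ∀ p u, α p (u, 0) = 0) :
    ∃ ζ : F → F →L[ℝ] ℝ, ContDiff ℝ n ζ ∧ IsClosedOneForm ζ ∧ ∀ p w, α p w = ζ p.2 w.2 :=
  ⟨fun s => (α (0, s)).comp (ContinuousLinearMap.inr ℝ E F),
    (hα'.comp (contDiff_const.prodMk contDiff_id)).clm_comp contDiff_const,
    hα.comp_inr (hα'.differentiable hn), hα.apply_eq_apply_zero_snd (hα'.differentiable hn) hfib⟩

end ClosedOneForm

section Contraction

variable {E : Type*} [NormedAddCommGroup E] [NormedSpace ℝ E] (Ω : E →L[ℝ] E →L[ℝ] ℝ)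
  {Y : E → E}

theorem fderiv_contraction_pullback_sub (hΩ : ∀ v w, Ω v w = -Ω w v) (hY : Differentiable ℝ Y)
    {g : E → E} (hg : ContDiff ℝ 2 g) (x u v : E) :
    fderiv ℝ (fun y => Ω (Y (g y)) (fderiv ℝ g y v)) x u
        - fderiv ℝ (fun y => Ω (Y (g y)) (fderiv ℝ g y u)) x v
      = Ω (fderiv ℝ Y (g x) (fderiv ℝ g x u)) (fderiv ℝ g x v)
        + Ω (fderiv ℝ g x u) (fderiv ℝ Y (g x) (fderiv ℝ g x v)) := by
  have hg1 : Differentiable ℝ g := hg.differentiable two_ne_zero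
  have hDg : Differentiable ℝ (fderiv ℝ g) :=
    (hg.fderiv_right (m := 1) (by norm_num)).differentiable one_ne_zero
  have hexpand : ∀ u v, fderiv ℝ (fun y => Ω (Y (g y)) (fderiv ℝ g y v)) x u
      = Ω (fderiv ℝ Y (g x) (fderiv ℝ g x u)) (fderiv ℝ g x v)
        + Ω (Y (g x)) (fderiv ℝ (fderiv ℝ g) x u v) := fun u v => by
    have hΩYg : HasFDerivAt (fun y => Ω (Y (g y)))
        (Ω.comp ((fderiv ℝ Y (g x)).comp (fderiv ℝ g x))) x :=
      Ω.hasFDerivAt.comp x ((hY _).hasFDerivAt.comp x (hg1 x).hasFDerivAt)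
    have hDgv : HasFDerivAt (fun y => fderiv ℝ g y v)
        ((ContinuousLinearMap.apply ℝ E v).comp (fderiv ℝ (fderiv ℝ g) x)) x :=
      (ContinuousLinearMap.apply ℝ E v).hasFDerivAt.comp x (hDg x).hasFDerivAt
    rw [(hΩYg.clm_apply hDgv).fderiv]
    simp [add_comm]
  rw [hexpand, hexpand, (hg.contDiffAt.isSymmSndFDerivAt (by simp)).eq u v,
    hΩ (fderiv ℝ Y (g x) (fderiv ℝ g x v))]
  ring

variable {φ : ℝ → E → E}

theorem continuous_pullback_contraction (hY : Continuous Y)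
    (hΦ : ContDiff ℝ 1 fun p : ℝ × E => φ p.1 p.2) (x : E) :
    Continuous fun t => (Ω (Y (φ t x))).comp (fderiv ℝ (φ t) x) := by
  simp_rw [fderiv_flow_eq_comp_inr (hΦ.differentiable one_ne_zero)]
  exact ((Ω.continuous.comp (hY.comp hΦ.continuous)).clm_comp
    ((hΦ.continuous_fderiv one_ne_zero).clm_comp continuous_const)).comp (.prodMk_left x)

variable [FiniteDimensional ℝ E]

theorem contDiff_integral_pullback_contraction {n : ℕ∞} (hY : ContDiff ℝ n Y)
    (hΦ : ContDiff ℝ (n + 1) fun p : ℝ × E => φ p.1 p.2) (a b : ℝ) :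
    ContDiff ℝ n fun x => ∫ t in a..b, (Ω (Y (φ t x))).comp (fderiv ℝ (φ t) x) := by
  simp_rw [fderiv_flow_eq_comp_inr (hΦ.differentiable (by simp))]
  exact contDiff_intervalIntegral ((Ω.contDiff.comp (hY.comp (hΦ.of_le le_self_add))).clm_comp
    ((hΦ.fderiv_right le_rfl).clm_comp contDiff_const)) a b

theorem isClosedOneForm_integral_pullback_contraction (hΩ : ∀ v w, Ω v w = -Ω w v)
    (hY : ContDiff ℝ 1 Y) (hΦ : ContDiff ℝ 2 fun p : ℝ × E => φ p.1 p.2)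
    (hφ' : ∀ t x, HasDerivAt (fun s => φ s x) (Y (φ t x)) t) {T : ℝ} (hT : φ T = φ 0) :
    IsClosedOneForm fun x => ∫ t in 0..T, (Ω (Y (φ t x))).comp (fderiv ℝ (φ t) x) := by
  set Φ : ℝ × E → E := fun p => φ p.1 p.2
  have hΦ1 : Differentiable ℝ Φ := hΦ.differentiable two_ne_zero
  set K : ℝ × E → E →L[ℝ] ℝ :=
    fun p => (Ω (Y (Φ p))).comp ((fderiv ℝ Φ p).comp (ContinuousLinearMap.inr ℝ ℝ E))
  have hK : ContDiff ℝ 1 K := (Ω.contDiff.comp (hY.comp (hΦ.of_le one_le_two))).clm_comp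
    ((hΦ.fderiv_right le_rfl).clm_comp contDiff_const)
  simp_rw [fderiv_flow_eq_comp_inr hΦ1]
  intro x u v
  have hDK : ∀ u, Continuous fun t => fderiv ℝ K (t, x) (0, u) := fun u =>
    ((hK.continuous_fderiv one_ne_zero).comp (.prodMk_left x)).clm_apply continuous_const
  have happly : ∀ u v, fderiv ℝ (fun x => ∫ t in 0..T, K (t, x)) x u v
      = ∫ t in 0..T, fderiv ℝ K (t, x) (0, u) v := fun u v => by
    rw [fderiv_intervalIntegral_apply hK]
    exact ContinuousLinearMap.intervalIntegral_apply ((hDK u).intervalIntegrable _ _) v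
  have hpartial : ∀ t u v, fderiv ℝ K (t, x) (0, u) v
      = fderiv ℝ (fun y => Ω (Y (φ t y)) (fderiv ℝ (φ t) y v)) x u := fun t u v => by
    rw [← fderiv_clm_apply_const_apply (hK.differentiable one_ne_zero _),
      ← fderiv_comp_prodMk_right_apply (f := fun p => K p v)
        ((hK.differentiable one_ne_zero _).clm_apply (differentiableAt_const v))]
    simp_rw [fderiv_flow_eq_comp_inr hΦ1]
    rfl
  -- the antisymmetric part of the integrand is `∂ₜ (φₜ^* Ω)(u, v)`
  have hderiv : ∀ t, HasDerivAt (fun s => Ω (fderiv ℝ (φ s) x u) (fderiv ℝ (φ s) x v))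
      (fderiv ℝ K (t, x) (0, u) v - fderiv ℝ K (t, x) (0, v) u) t := fun t => by
    have hφt : ContDiff ℝ 2 (φ t) := hΦ.comp (contDiff_const.prodMk contDiff_id)
    have hvar := hasDerivAt_fderiv_flow_apply hφ' hΦ (hY.differentiable one_ne_zero) t x
    rw [hpartial, hpartial,
      fderiv_contraction_pullback_sub Ω hΩ (hY.differentiable one_ne_zero) hφt]
    exact (Ω.hasFDerivAt.comp_hasDerivAt t (hvar u)).clm_apply (hvar v)
  have hcont : ∀ u v, Continuous fun t => fderiv ℝ K (t, x) (0, u) v := fun u v =>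
    (hDK u).clm_apply continuous_const
  rw [happly, happly, ← sub_eq_zero, ← intervalIntegral.integral_sub
    ((hcont u v).intervalIntegrable _ _) ((hcont v u).intervalIntegrable _ _),
    intervalIntegral.integral_eq_sub_of_hasDerivAt (fun t _ => hderiv t)
      (((hcont u v).sub (hcont v u)).intervalIntegrable _ _), hT, sub_self]

end Contraction

theorem apply_eq_sum_mul_apply_single {ι : Type*} [Fintype ι] [DecidableEq ι]
    (ℓ : (ι → ℝ) →L[ℝ] ℝ) (a : ι → ℝ) : ℓ a = ∑ i, a i * ℓ (Pi.single i 1) := by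
  conv_lhs => rw [← Finset.univ_sum_single a]
  refine (map_sum ℓ _ _).trans (Finset.sum_congr rfl fun i _ => ?_)
  rw [← smul_eq_mul, ← map_smul, ← Pi.single_smul', smul_eq_mul, mul_one]

section SlowFast

variable {r k : ℕ} {φ : ℝ → SF r k → SF r k}

variable (r k) in
def fastSymplectic : SF r k →L[ℝ] SF r k →L[ℝ] ℝ :=
  let y (i : Fin r) : SF r k →L[ℝ] ℝ :=
    (ContinuousLinearMap.proj i).comp ((ContinuousLinearMap.fst ℝ _ _).comp (.fst ℝ _ _))
  let x (i : Fin r) : SF r k →L[ℝ] ℝ :=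
    (ContinuousLinearMap.proj i).comp ((ContinuousLinearMap.snd ℝ _ _).comp (.fst ℝ _ _))
  ∑ i, ((ContinuousLinearMap.mul ℝ ℝ).bilinearComp (y i) (x i)
    - (ContinuousLinearMap.mul ℝ ℝ).bilinearComp (x i) (y i))

theorem fastSymplectic_apply (W W' : SF r k) :
    fastSymplectic r k W W' = ∑ i, (W.1.1 i * W'.1.2 i - W.1.2 i * W'.1.1 i) := by
  simp [fastSymplectic]

theorem fastSymplectic_antisymm (W W' : SF r k) :
    fastSymplectic r k W W' = -fastSymplectic r k W' W := by
  simp only [fastSymplectic_apply, ← Finset.sum_neg_distrib]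
  exact Finset.sum_congr rfl fun i _ => by ring

theorem fastSymplectic_self (W : SF r k) : fastSymplectic r k W W = 0 :=
  self_eq_neg.1 (fastSymplectic_antisymm W W)

theorem fastSymplectic_fastVF_apply (H : SF r k → ℝ) (m W : SF r k) :
    fastSymplectic r k (fastVF H m) W = -fderiv ℝ H m (W.1, 0) := by
  set ℓ := fderiv ℝ H m
  have hsplit : ℓ (W.1, 0)
      = ℓ.comp ((ContinuousLinearMap.inl ℝ _ (Slow k)).comp (.inl ℝ _ _)) W.1.1
        + ℓ.comp ((ContinuousLinearMap.inl ℝ _ (Slow k)).comp (.inr ℝ _ _)) W.1.2 := by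
    simp [← map_add]
  rw [hsplit, apply_eq_sum_mul_apply_single _ W.1.1, apply_eq_sum_mul_apply_single _ W.1.2,
    fastSymplectic_apply]
  simp only [fastVF, ContinuousLinearMap.comp_apply, ContinuousLinearMap.inl_apply,
    ContinuousLinearMap.inr_apply, neg_add, ← Finset.sum_neg_distrib, ← Finset.sum_add_distrib]
  exact Finset.sum_congr rfl fun i _ => by ring

theorem contDiff_fastVF {n : ℕ∞} {H : SF r k → ℝ} (hH : ContDiff ℝ (n + 1) H) :
    ContDiff ℝ n (fastVF H) := by
  have hdH := hH.fderiv_right le_rfl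
  exact ((contDiff_pi.2 fun i => (hdH.clm_apply contDiff_const).neg).prodMk
    (contDiff_pi.2 fun i => hdH.clm_apply contDiff_const)).prodMk contDiff_const

theorem d1Form_eq_fderiv_add_fastSymplectic {H J ω : SF r k → ℝ}
    (hH2 : ∀ m (u : Fast r), fderiv ℝ J m (u, (0 : Slow k)) = (1 / ω m) * fderiv ℝ H m (u, 0))
    (m V : SF r k) :
    d1Form J m V = fderiv ℝ J m V + fastSymplectic r k ((ω m)⁻¹ • fastVF H m) V := by
  have hV : ((0 : Fast r), V.2) = V - (V.1, 0) := by ext <;> simp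
  rw [d1Form, hV, map_sub, hH2, map_smul, smul_apply, fastSymplectic_fastVF_apply, smul_eq_mul]
  ring

theorem fderiv_flow_apply_snd (hφ : ∀ t, Differentiable ℝ (φ t))
    (hslow : ∀ t m, (φ t m).2 = m.2) (t : ℝ) (m w : SF r k) :
    (fderiv ℝ (φ t) m w).2 = w.2 := by
  simpa [fderiv_snd] using fderiv_apply_fderiv_eq_of_comp_eq_self (f := Prod.snd)
    (funext (hslow t)) differentiableAt_snd (hφ t m) w

theorem avg1_d1Form_eq_integral (hφ : ∀ t, Differentiable ℝ (φ t))
    (hslow : ∀ t m, (φ t m).2 = m.2) (f : SF r k → ℝ) (m w : SF r k) :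
    avg1 φ (d1Form f) m w = 1 / (2 * π) * ∫ t in 0..2 * π, fderiv ℝ f (φ t m) (0, w.2) := by
  simp only [avg1, d1Form, fderiv_flow_apply_snd hφ hslow]

theorem avg1_d1Form_add_comp_snd (hΦ : ContDiff ℝ 1 fun p : ℝ × SF r k => φ p.1 p.2)
    (hslow : ∀ t m, (φ t m).2 = m.2) {J : SF r k → ℝ} (hJ : ContDiff ℝ 1 J) {c : Slow k → ℝ}
    (hc : Differentiable ℝ c) (m w : SF r k) :
    avg1 φ (d1Form fun n => J n + c n.2) m w = avg1 φ (d1Form J) m w + fderiv ℝ c m.2 w.2 := by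
  have hφ : ∀ t, Differentiable ℝ (φ t) := fun t =>
    (hΦ.comp (contDiff_const.prodMk contDiff_id)).differentiable one_ne_zero
  have hJc : ∀ n, fderiv ℝ (fun n => J n + c n.2) n (0, w.2)
      = fderiv ℝ J n (0, w.2) + fderiv ℝ c n.2 w.2 := fun n => by
    have h : HasFDerivAt (fun n => J n + c n.2) (fderiv ℝ J n
        + (fderiv ℝ c n.2).comp (ContinuousLinearMap.snd ℝ (Fast r) (Slow k))) n :=
      (hJ.differentiable one_ne_zero n).hasFDerivAt.add
        ((hc n.2).hasFDerivAt.comp n hasFDerivAt_snd)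
    rw [h.fderiv]
    rfl
  have hcont : Continuous fun t => fderiv ℝ J (φ t m) (0, w.2) :=
    ((hJ.continuous_fderiv one_ne_zero).comp (hΦ.continuous.comp (.prodMk_left m))).clm_apply
      continuous_const
  simp only [avg1_d1Form_eq_integral hφ hslow, hJc, hslow]
  rw [intervalIntegral.integral_add (hcont.intervalIntegrable _ _) intervalIntegrable_const,
    intervalIntegral.integral_const, sub_zero, smul_eq_mul]
  field_simp

theorem avg1_d1Form_eq_fderiv_add_integral
    (hΦ : ContDiff ℝ 1 fun p : ℝ × SF r k => φ p.1 p.2) {Y : SF r k → SF r k}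
    (hY : Continuous Y) {J : SF r k → ℝ} (hJ : Differentiable ℝ J)
    (hJinv : ∀ t m, J (φ t m) = J m)
    (hd1 : ∀ m V, d1Form J m V = fderiv ℝ J m V + fastSymplectic r k (Y m) V) (m w : SF r k) :
    avg1 φ (d1Form J) m w = fderiv ℝ J m w + (2 * π)⁻¹
      * (∫ t in 0..2 * π, (fastSymplectic r k (Y (φ t m))).comp (fderiv ℝ (φ t) m)) w := by
  have hφ : ∀ t, Differentiable ℝ (φ t) := fun t =>
    (hΦ.comp (contDiff_const.prodMk contDiff_id)).differentiable one_ne_zero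
  have hcont := continuous_pullback_contraction (fastSymplectic r k) hY hΦ m
  have hint : IntervalIntegrable (fun t => fastSymplectic r k (Y (φ t m)) (fderiv ℝ (φ t) m w))
      volume 0 (2 * π) := (hcont.clm_apply continuous_const).intervalIntegrable _ _
  have happly : (∫ t in 0..2 * π, (fastSymplectic r k (Y (φ t m))).comp (fderiv ℝ (φ t) m)) w
      = ∫ t in 0..2 * π, fastSymplectic r k (Y (φ t m)) (fderiv ℝ (φ t) m w) :=
    ContinuousLinearMap.intervalIntegral_apply (hcont.intervalIntegrable _ _) w
  simp only [avg1, hd1, fderiv_apply_fderiv_eq_of_comp_eq_self (funext (hJinv _)) (hJ _) (hφ _ m)]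
  rw [intervalIntegral.integral_add intervalIntegrable_const hint, intervalIntegral.integral_const,
    sub_zero, smul_eq_mul, happly]
  field_simp

theorem exists_isClosedOneForm_avg1_d1Form_eq {n : ℕ∞} (hn : 1 ≤ n) {Y : SF r k → SF r k}
    (hY : ContDiff ℝ n Y) (hΦ : ContDiff ℝ (n + 1) fun p : ℝ × SF r k => φ p.1 p.2)
    (hφ' : ∀ t m, HasDerivAt (fun s => φ s m) (Y (φ t m)) t) (hperiod : φ (2 * π) = φ 0)
    {J : SF r k → ℝ} (hJ : ContDiff ℝ (n + 1) J) (hJinv : ∀ t m, J (φ t m) = J m)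
    (hd1 : ∀ m V, d1Form J m V = fderiv ℝ J m V + fastSymplectic r k (Y m) V) :
    ∃ β : SF r k → SF r k →L[ℝ] ℝ, ContDiff ℝ n β ∧ IsClosedOneForm β ∧
      ∀ m w, avg1 φ (d1Form J) m w = β m w := by
  have h1 : (1 : WithTop ℕ∞) ≤ n := by exact_mod_cast hn
  have h2 : (2 : WithTop ℕ∞) ≤ n + 1 := by
    rw [show (2 : WithTop ℕ∞) = 1 + 1 by norm_num]
    gcongr
  have hn0 : (n : WithTop ℕ∞) ≠ 0 := (zero_lt_one.trans_le h1).ne'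
  have hκ := contDiff_integral_pullback_contraction (fastSymplectic r k) hY hΦ 0 (2 * π)
  have hdJ : ContDiff ℝ n (fderiv ℝ J) := hJ.fderiv_right le_rfl
  refine ⟨_, hdJ.add (hκ.const_smul (2 * π)⁻¹), ?_, avg1_d1Form_eq_fderiv_add_integral
    (hΦ.of_le (h1.trans le_self_add)) hY.continuous (hJ.differentiable (by simp)) hJinv hd1⟩
  exact (isClosedOneForm_fderiv (hJ.of_le h2)).add
    ((isClosedOneForm_integral_pullback_contraction _ fastSymplectic_antisymm (hY.of_le h1)
      (hΦ.of_le h2) hφ' hperiod).const_smul (hκ.differentiable hn0) _)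
    (hdJ.differentiable hn0) ((hκ.const_smul (2 * π)⁻¹).differentiable hn0)

end SlowFast

/-- Under hypotheses (H1) and (H2), the average `⟨d₁J⟩` is the
pullback of a closed 1-form `ζ` on the slow factor, and replacing `J` by
`J + c∘π₁` changes `ζ` to `ζ + Dc`; in particular the De Rham class of `ζ`
does not depend on this choice. -/
theorem stmt5 {r k : ℕ} (H : SF r k → ℝ) (hH : ContDiff ℝ (⊤ : ℕ∞) H)
    (ω : SF r k → ℝ) (hω_smooth : ContDiff ℝ (⊤ : ℕ∞) ω) (hω_pos : ∀ m, 0 < ω m)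
    (φ : ℝ → SF r k → SF r k)
    (hφ_smooth : ContDiff ℝ (⊤ : ℕ∞) (fun p : ℝ × SF r k => φ p.1 p.2))
    (hφ0 : ∀ m, φ 0 m = m)
    (hφ' : ∀ t m, HasDerivAt (fun s => φ s m) ((ω (φ t m))⁻¹ • fastVF H (φ t m)) t)
    (hper : ∀ t m, φ (t + 2 * π) m = φ t m)
    (J : SF r k → ℝ) (hJ_smooth : ContDiff ℝ (⊤ : ℕ∞) J)
    (hH2 : ∀ m (u : Fast r),
      fderiv ℝ J m (u, (0 : Slow k)) = (1 / ω m) * fderiv ℝ H m (u, 0)) :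
    ∃ ζ : Slow k → (Slow k →L[ℝ] ℝ), ContDiff ℝ (⊤ : ℕ∞) ζ ∧
      (∀ (s : Slow k) (u v : Slow k), fderiv ℝ ζ s u v = fderiv ℝ ζ s v u) ∧
      (∀ m w, avg1 φ (d1Form J) m w = ζ m.2 w.2) ∧
      (∀ c : Slow k → ℝ, ContDiff ℝ (⊤ : ℕ∞) c → ∀ m w,
        avg1 φ (d1Form (fun n => J n + c n.2)) m w = ζ m.2 w.2 + fderiv ℝ c m.2 w.2) := by
  set Y : SF r k → SF r k := fun m => (ω m)⁻¹ • fastVF H m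
  have hY : ContDiff ℝ (⊤ : ℕ∞) Y :=
    (hω_smooth.inv fun m => (hω_pos m).ne').smul (contDiff_fastVF (by simpa using hH))
  have hflow : ∀ t m, HasDerivAt (fun s => φ s m) (Y (φ t m)) t := hφ'
  have hd1 : ∀ m V, d1Form J m V = fderiv ℝ J m V + fastSymplectic r k (Y m) V :=
    d1Form_eq_fderiv_add_fastSymplectic hH2
  have hslow : ∀ t m, (φ t m).2 = m.2 :=
    apply_flow_eq_of_fderiv_apply_eq_zero hflow hφ0 differentiable_snd fun m => by
      simp [Y, fastVF, fderiv_snd]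
  have hJinv : ∀ t m, J (φ t m) = J m :=
    apply_flow_eq_of_fderiv_apply_eq_zero hflow hφ0 (hJ_smooth.differentiable (by simp))
      fun m => by simpa [fastSymplectic_self, d1Form, Y, fastVF, Prod.mk_zero_zero]
        using (hd1 m (Y m)).symm
  have hperiod : φ (2 * π) = φ 0 := funext fun m => by simpa using hper 0 m
  obtain ⟨β, hβ, hβ_closed, hβ_avg⟩ := exists_isClosedOneForm_avg1_d1Form_eq le_top hY
    (by simpa using hφ_smooth) hflow hperiod (by simpa using hJ_smooth) hJinv hd1
  have hφ_diff : ∀ t, Differentiable ℝ (φ t) := fun t =>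
    (hφ_smooth.comp (contDiff_const.prodMk contDiff_id)).differentiable (by simp)
  have hβ_fiber : ∀ m (u : Fast r), β m (u, 0) = 0 := fun m u => by
    simp [← hβ_avg, avg1_d1Form_eq_integral hφ_diff hslow, Prod.mk_zero_zero]
  obtain ⟨ζ, hζ, hζ_closed, hβζ⟩ := hβ_closed.exists_eq_comp_snd hβ (by simp) hβ_fiber
  refine ⟨ζ, hζ, hζ_closed, fun m w => by rw [hβ_avg, hβζ], fun c hc m w => ?_⟩
  rw [avg1_d1Form_add_comp_snd (hφ_smooth.of_le (by simp)) hslow (hJ_smooth.of_le (by simp))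
    (hc.differentiable (by simp)), hβ_avg, hβζ]
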